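/- arXiv:math/9710216 — 3 statements merged into one kernel-verified Lean document; each statement's English description precedes it below -/
import Mathlib

section
/- In the forcing Q (as in the main construction): if p₁, p₂ ∈ Q are compatible as functions, then p₁ ∪ p₂ ∈ Q; moreover, letting q = p₁ ∪ p₂, if for i = 1, 2 the set of E_κ-classes growing from dom(p_i) to dom(q) has cardinality < θ_κ for every κ ∈ K, then q is the least upper bound of p₁ and p₂ in (Q, ≤). -/
open Cardinal Set

noncomputable section

attribute [local instance] Classical.propDecidable

/-- A forcing condition: a partial `{0,1}`-valued function on ordinals,
coded as an `Option Bool`-valued function. -/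
abbrev Cond : Type 1 := Ordinal → Option Bool

/-- The domain of a condition. -/
def cdom (q : Cond) : Set Ordinal := {i | (q i).isSome}

/-- The `E_κ`-equivalence class of `i` : `j E_κ i` iff `j + κ = i + κ` (ordinal addition). -/
def Ecl (κ : Cardinal) (i : Ordinal) : Set Ordinal := {j | j + κ.ord = i + κ.ord}

/-- The `E_{<κ}`-class of `i`, where `E_{<κ} = id ∪ ⋃ {E_θ : θ ∈ K ∩ κ}`. -/
def EclLt (K : Set Cardinal) (κ : Cardinal) (i : Ordinal) : Set Ordinal :=
  {i} ∪ ⋃ θ ∈ K ∩ Set.Iio κ, Ecl θ i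

/-- `θ_κ` : the least regular cardinal `≥ sup((K ∩ κ) ∪ {λ})`. -/
def theta (lam : Cardinal) (K : Set Cardinal) (κ : Cardinal) : Cardinal :=
  sInf {θ : Cardinal | θ.IsRegular ∧ sSup ((K ∩ Set.Iio κ) ∪ {lam}) ≤ θ}

/-- `A` grows from `X` to `Y` : `∅ ≠ A ∩ X ≠ A ∩ Y`. -/
def grows (A X Y : Set Ordinal) : Prop := (A ∩ X).Nonempty ∧ A ∩ X ≠ A ∩ Y

/-- Membership in the forcing `Q = Q_K`. -/
def inQ (lam mu : Cardinal) (K : Set Cardinal) (q : Cond) : Prop :=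
  cdom q ⊆ Set.Iio mu.ord ∧
    ∀ i < mu.ord, ∀ κ ∈ K, #↥(Ecl κ i ∩ cdom q) < Cardinal.lift.{1} (theta lam K κ)

/-- The set of `E_κ`-classes which grow from `X` to `Y`. -/
def growClasses (mu : Cardinal) (κ : Cardinal) (X Y : Set Ordinal) : Set (Set Ordinal) :=
  {A | (∃ i < mu.ord, A = Ecl κ i) ∧ grows A X Y}

/-- The forcing order: `p ⊆ q` and for each `κ ∈ K`, fewer than `θ_κ` many
`E_κ`-classes grow from `dom p` to `dom q`. -/
def condLe (lam mu : Cardinal) (K : Set Cardinal) (p q : Cond) : Prop :=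
  (∀ i b, p i = some b → q i = some b) ∧
    ∀ κ ∈ K, #↥(growClasses mu κ (cdom p) (cdom q)) < Cardinal.lift.{1} (theta lam K κ)

/-- Pure extension at `κ`: no `E_κ`-class represented in `dom p` grows. -/
def condLePr (lam mu : Cardinal) (K : Set Cardinal) (κ : Cardinal) (p q : Cond) : Prop :=
  condLe lam mu K p q ∧ ∀ i : Ordinal, ¬ grows (Ecl κ i) (cdom p) (cdom q)

/-- Apure extension at `κ`: no new `E_κ`-classes are represented in `dom q`. -/
def condLeApr (lam mu : Cardinal) (K : Set Cardinal) (κ : Cardinal) (p q : Cond) : Prop :=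
  condLe lam mu K p q ∧ ∀ i ∈ cdom q, (Ecl κ i ∩ cdom p).Nonempty

/-- Union of two conditions (as partial functions, left priority). -/
def unionC (p q : Cond) : Cond := fun i => (p i).orElse (fun _ => q i)

/-- Restriction of a condition to a set of ordinals. -/
def restrictC (q : Cond) (X : Set Ordinal) : Cond := fun ξ => if ξ ∈ X then q ξ else none

/-- Union of a family of conditions indexed by ordinals below `θo`. -/
def unionFam (f : Ordinal → Cond) (θo : Ordinal) : Cond :=
  fun ξ => if h : ∃ i, i < θo ∧ (f i ξ).isSome then f h.choose ξ else none

/-- Compatibility in `Q`: existence of a common upper bound in `Q`. -/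
def compatQ (lam mu : Cardinal) (K : Set Cardinal) (q₁ q₂ : Cond) : Prop :=
  ∃ r : Cond, inQ lam mu K r ∧ condLe lam mu K q₁ r ∧ condLe lam mu K q₂ r

/-- Standing ground-model hypotheses: `λ = λ^{<λ}` regular, `μ = μ^λ` regular,
`K ⊆ [λ, μ]` a set of regular cardinals with `λ, μ ∈ K`. -/
def GroundCtx (lam mu : Cardinal) (K : Set Cardinal) : Prop :=
  lam.IsRegular ∧ lam ^< lam = lam ∧ mu.IsRegular ∧ mu ^ lam = mu ∧
    (∀ κ ∈ K, κ.IsRegular ∧ lam ≤ κ ∧ κ ≤ mu) ∧ lam ∈ K ∧ mu ∈ K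

lemma theta_mem (lam : Cardinal) (K : Set Cardinal) (κ : Cardinal) :
    (theta lam K κ).IsRegular ∧ sSup ((K ∩ Set.Iio κ) ∪ {lam}) ≤ theta lam K κ := by
  have hne : {θ : Cardinal | θ.IsRegular ∧ sSup ((K ∩ Set.Iio κ) ∪ {lam}) ≤ θ}.Nonempty := by
    refine ⟨Order.succ (sSup ((K ∩ Set.Iio κ) ∪ {lam}) ⊔ ℵ₀),
      Cardinal.isRegular_succ (le_max_right _ _), ?_⟩
    exact (le_max_left _ _).trans (Order.le_succ _)
  exact csInf_mem hne

lemma cdom_unionC (p q : Cond) : cdom (unionC p q) = cdom p ∪ cdom q := by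
  ext i
  simp only [cdom, unionC, Set.mem_setOf_eq, Set.mem_union]
  cases h : p i <;> simp [Option.orElse]

/-- if `p₁, p₂ ∈ Q` are compatible as functions then `p₁ ∪ p₂ ∈ Q`;
moreover, if clause (c) of the order holds between each `pᵢ` and `q = p₁ ∪ p₂`,
then `q` is the least upper bound of `p₁, p₂` in `(Q, ≤)`. -/
theorem stmt5 (lam mu : Cardinal) (K : Set Cardinal) (hctx : GroundCtx lam mu K)
    (p₁ p₂ : Cond) (h₁ : inQ lam mu K p₁) (h₂ : inQ lam mu K p₂)
    (hcomp : ∀ i a b, p₁ i = some a → p₂ i = some b → a = b) :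
    inQ lam mu K (unionC p₁ p₂) ∧
    ((∀ κ ∈ K,
        #↥(growClasses mu κ (cdom p₁) (cdom (unionC p₁ p₂))) <
          Cardinal.lift.{1} (theta lam K κ) ∧
        #↥(growClasses mu κ (cdom p₂) (cdom (unionC p₁ p₂))) <
          Cardinal.lift.{1} (theta lam K κ)) →
      condLe lam mu K p₁ (unionC p₁ p₂) ∧ condLe lam mu K p₂ (unionC p₁ p₂) ∧
        ∀ r, inQ lam mu K r → condLe lam mu K p₁ r → condLe lam mu K p₂ r →
          condLe lam mu K (unionC p₁ p₂) r) := by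

  have hal : ∀ κ, (ℵ₀ : Cardinal.{1}) ≤ Cardinal.lift.{1} (theta lam K κ) := fun κ => by
    simpa using (theta_mem lam K κ).1.aleph0_le
  set q := unionC p₁ p₂ with hq
  have hd : cdom q = cdom p₁ ∪ cdom p₂ := cdom_unionC p₁ p₂
  have hQ : inQ lam mu K q := by
    constructor
    · rw [hd]; exact Set.union_subset h₁.1 h₂.1
    · intro i hi κ hκ
      rw [hd, Set.inter_union_distrib_left]
      exact lt_of_le_of_lt (Cardinal.mk_union_le _ _)
        (Cardinal.add_lt_of_lt (hal κ) (h₁.2 i hi κ hκ) (h₂.2 i hi κ hκ))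
  refine ⟨hQ, fun hc => ?_⟩
  have ha1 : ∀ i b, p₁ i = some b → q i = some b := fun i b h => by
    simp [hq, unionC, h]
  have ha2 : ∀ i b, p₂ i = some b → q i = some b := fun i b h => by
    cases h1 : p₁ i with
    | none => simp [hq, unionC, h1, h, Option.orElse]
    | some a => rw [hcomp i a b h1 h] at h1; simp [hq, unionC, h1]
  refine ⟨⟨ha1, fun κ hκ => (hc κ hκ).1⟩, ⟨ha2, fun κ hκ => (hc κ hκ).2⟩, ?_⟩
  intro r hr hr1 hr2
  have hqr : ∀ i b, q i = some b → r i = some b := by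
    intro i b h
    cases h1 : p₁ i with
    | some a =>
        have h2 : q i = some a := ha1 i a h1
        have hab : a = b := by rw [h2] at h; injection h
        exact hr1.1 i b (hab ▸ h1)
    | none =>
        have h2 : q i = p₂ i := by simp [hq, unionC, h1, Option.orElse]
        exact hr2.1 i b (h2 ▸ h)
  have hsub : ∀ (p : Cond), (∀ i b, p i = some b → r i = some b) → cdom p ⊆ cdom r := by
    intro p hp i hi
    obtain ⟨b, hb⟩ := Option.isSome_iff_exists.mp hi
    exact Option.isSome_iff_exists.mpr ⟨b, hp i b hb⟩
  have hqr' : cdom q ⊆ cdom r := hsub q hqr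
  refine ⟨hqr, fun κ hκ => ?_⟩
  have hgsub : growClasses mu κ (cdom q) (cdom r) ⊆
      growClasses mu κ (cdom p₁) (cdom r) ∪ growClasses mu κ (cdom p₂) (cdom r) := by
    rintro A ⟨hA, hne, hneq⟩
    have hAq : A ∩ cdom q = (A ∩ cdom p₁) ∪ (A ∩ cdom p₂) := by
      rw [hd, Set.inter_union_distrib_left]
    by_cases h1 : (A ∩ cdom p₁).Nonempty
    · by_cases h1' : A ∩ cdom p₁ = A ∩ cdom r
      · right
        have h2' : A ∩ cdom p₂ ≠ A ∩ cdom r := by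
          intro h2'
          exact hneq (by rw [hAq, h1', h2', Set.union_self])
        have h2 : (A ∩ cdom p₂).Nonempty := by
          by_contra h2
          rw [Set.not_nonempty_iff_eq_empty] at h2
          exact hneq (by rw [hAq, h2, Set.union_empty, h1'])
        exact ⟨hA, h2, h2'⟩
      · exact Or.inl ⟨hA, h1, h1'⟩
    · right
      rw [Set.not_nonempty_iff_eq_empty] at h1
      have hAq2 : A ∩ cdom q = A ∩ cdom p₂ := by rw [hAq, h1, Set.empty_union]
      refine ⟨hA, ?_, ?_⟩
      · rw [← hAq2]; exact hne
      · rw [← hAq2]; exact hneq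
  calc #↥(growClasses mu κ (cdom q) (cdom r))
      ≤ #↥(growClasses mu κ (cdom p₁) (cdom r) ∪ growClasses mu κ (cdom p₂) (cdom r)) :=
        Cardinal.mk_le_mk_of_subset hgsub
    _ ≤ _ + _ := Cardinal.mk_union_le _ _
    _ < _ := Cardinal.add_lt_of_lt (hal κ) (hr1.2 κ hκ) (hr2.2 κ hκ)
end
end

section
/- Splitting lemma for Q: if p ≤ q in Q and κ ∈ K, then there exist r, s ∈ Q with p ≤^{pr}_κ r ≤^{apr}_κ q, p ≤^{apr}_κ s ≤^{pr}_κ q, and q = r ∪ s. (Here r = q restricted to the ordinals ξ ∈ dom(q) with ξ ∈ dom(p) or [ξ]_κ ∩ dom(p) = ∅, and s = q restricted to {ξ ∈ dom(q) : [ξ]_κ ∩ dom(p) ≠ ∅}.) -/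
open Cardinal Set

noncomputable section

attribute [local instance] Classical.propDecidable

lemma Ecl_self (κ : Cardinal) (i : Ordinal) : i ∈ Ecl κ i := rfl

lemma Ecl_eq_of_mem {κ : Cardinal} {i j : Ordinal} (h : j ∈ Ecl κ i) : Ecl κ j = Ecl κ i := by
  ext k
  simp only [Ecl, Set.mem_setOf_eq] at *
  rw [h]

lemma Ecl_mono {κ κ' : Cardinal} (h : κ ≤ κ') {i j : Ordinal}
    (hij : j ∈ Ecl κ i) : j ∈ Ecl κ' i := by
  have h' : κ.ord ≤ κ'.ord := Cardinal.ord_le_ord.mpr h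
  simp only [Ecl, Set.mem_setOf_eq] at *
  calc j + κ'.ord = j + κ.ord + (κ'.ord - κ.ord) := by
        rw [add_assoc, Ordinal.add_sub_cancel_of_le h']
    _ = i + κ.ord + (κ'.ord - κ.ord) := by rw [hij]
    _ = i + κ'.ord := by rw [add_assoc, Ordinal.add_sub_cancel_of_le h']

lemma cdom_restrict (q : Cond) (X : Set Ordinal) : cdom (restrictC q X) = cdom q ∩ X := by
  ext ξ
  by_cases h : ξ ∈ X <;> simp [cdom, restrictC, h]

lemma exists_of_ne_of_subset {A B : Set Ordinal} (h : A ⊆ B) (hne : A ≠ B) :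
    ∃ x ∈ B, x ∉ A :=
  Set.exists_of_ssubset (h.ssubset_of_ne hne)

/-- Sandwich: if `P ⊆ X ⊆ Qd` then classes growing from `P` to `X` grow from `P` to `Qd`. -/
lemma growClasses_sandwich (mu κ' : Cardinal) {P X Qd : Set Ordinal}
    (hPX : P ⊆ X) (hXQ : X ⊆ Qd) :
    growClasses mu κ' P X ⊆ growClasses mu κ' P Qd := by
  rintro A ⟨hex, hne, hgrow⟩
  refine ⟨hex, hne, fun h => hgrow ?_⟩
  exact Set.Subset.antisymm (Set.inter_subset_inter_right _ hPX)
    (by rw [h]; exact Set.inter_subset_inter_right _ hXQ)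

/-- Key lemma: under a "splitting" hypothesis on `X`, every `E_κ'`-class growing from
`X` to `Qd` already grows from `P` to `Qd`. -/
lemma growClasses_key (mu κ κ' : Cardinal) {P X Qd : Set Ordinal}
    (hXQ : X ⊆ Qd)
    (hnotP : ∀ ξ ∈ Qd, ξ ∉ X → ξ ∉ P)
    (hsplit : ∀ η ξ, η ∈ X → η ∉ P → ξ ∈ Qd → ξ ∉ X →
      ¬((Ecl κ η ∩ P).Nonempty ↔ (Ecl κ ξ ∩ P).Nonempty)) :
    growClasses mu κ' X Qd ⊆ growClasses mu κ' P Qd := by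
  rintro A ⟨⟨i, hi, rfl⟩, hne, hgrow⟩
  obtain ⟨ξ, hξQ, hξX⟩ :=
    exists_of_ne_of_subset (Set.inter_subset_inter_right _ hXQ) hgrow
  have hξnX : ξ ∉ X := fun h => hξX ⟨hξQ.1, h⟩
  have hξP : ξ ∉ P := hnotP ξ hξQ.2 hξnX
  obtain ⟨η, hηA, hηX⟩ := hne
  have hAP : (Ecl κ' i ∩ P).Nonempty := by
    by_contra hAPe
    have hηP : η ∉ P := fun h => hAPe ⟨η, hηA, h⟩
    have hsp := hsplit η ξ hηX hηP hξQ.2 hξnX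
    rcases le_total κ κ' with hk | hk
    · -- E_κ refines E_κ'; whichever of η, ξ has its κ-class meeting P gives a point of A ∩ P
      by_cases hη : (Ecl κ η ∩ P).Nonempty
      · obtain ⟨j, hj1, hj2⟩ := hη
        have hjA : j ∈ Ecl κ' i := by
          have := Ecl_mono hk hj1
          rwa [Ecl_eq_of_mem hηA] at this
        exact hAPe ⟨j, hjA, hj2⟩
      · have hξm : (Ecl κ ξ ∩ P).Nonempty := by tauto
        obtain ⟨j, hj1, hj2⟩ := hξm
        have hjA : j ∈ Ecl κ' i := by
          have := Ecl_mono hk hj1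
          rwa [Ecl_eq_of_mem hξQ.1] at this
        exact hAPe ⟨j, hjA, hj2⟩
    · -- E_κ' refines E_κ, so η and ξ have the same κ-class
      have hηξ : η ∈ Ecl κ' ξ := by rw [Ecl_eq_of_mem hξQ.1]; exact hηA
      have : Ecl κ η = Ecl κ ξ := Ecl_eq_of_mem (Ecl_mono hk hηξ)
      exact hsp (by rw [this])
  refine ⟨⟨i, hi, rfl⟩, hAP, fun h => hξP ?_⟩
  have : ξ ∈ Ecl κ' i ∩ P := h ▸ hξQ
  exact this.2

/-- splitting lemma: if `p ≤ q` in `Q` and `κ ∈ K`, there are `r, s ∈ Q`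
with `p ≤pr_κ r ≤apr_κ q`, `p ≤apr_κ s ≤pr_κ q`, and `q = r ∪ s`, where `r` and `s`
are the indicated restrictions of `q`. -/
theorem stmt6 (lam mu : Cardinal) (K : Set Cardinal) (hctx : GroundCtx lam mu K)
    (κ : Cardinal) (hκ : κ ∈ K) (p q : Cond) (hp : inQ lam mu K p) (hq : inQ lam mu K q)
    (hpq : condLe lam mu K p q) :
    ∃ r s : Cond,
      r = restrictC q {ξ | ξ ∈ cdom p ∨ Ecl κ ξ ∩ cdom p = ∅} ∧
      s = restrictC q {ξ | Ecl κ ξ ∩ cdom p ≠ ∅} ∧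
      inQ lam mu K r ∧ inQ lam mu K s ∧
      condLePr lam mu K κ p r ∧ condLeApr lam mu K κ r q ∧
      condLeApr lam mu K κ p s ∧ condLePr lam mu K κ s q ∧
      q = unionC r s := by
  classical
  set S : Set Ordinal := {ξ | ξ ∈ cdom p ∨ Ecl κ ξ ∩ cdom p = ∅} with hSdef
  set T : Set Ordinal := {ξ | Ecl κ ξ ∩ cdom p ≠ ∅} with hTdef
  set r : Cond := restrictC q S with hrdef
  set s : Cond := restrictC q T with hsdef
  have hPQ : cdom p ⊆ cdom q := by
    intro i hi
    obtain ⟨b, hb⟩ := Option.isSome_iff_exists.mp hi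
    exact Option.isSome_iff_exists.mpr ⟨b, hpq.1 i b hb⟩
  have hPS : cdom p ⊆ S := fun i hi => Or.inl hi
  have hPT : cdom p ⊆ T := fun i hi =>
    Set.nonempty_iff_ne_empty.mp ⟨i, Ecl_self κ i, hi⟩
  have hcr : cdom r = cdom q ∩ S := cdom_restrict q S
  have hcs : cdom s = cdom q ∩ T := cdom_restrict q T
  have hrQ : cdom r ⊆ cdom q := by rw [hcr]; exact Set.inter_subset_left
  have hsQ : cdom s ⊆ cdom q := by rw [hcs]; exact Set.inter_subset_left
  have hPr : cdom p ⊆ cdom r := by rw [hcr]; exact fun i hi => ⟨hPQ hi, hPS hi⟩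
  have hPs : cdom p ⊆ cdom s := by rw [hcs]; exact fun i hi => ⟨hPQ hi, hPT hi⟩
  -- pointwise extensions
  have hpr : ∀ i b, p i = some b → r i = some b := by
    intro i b hb
    have hi : i ∈ S := hPS (Option.isSome_iff_exists.mpr ⟨b, hb⟩)
    simp only [hrdef, restrictC, if_pos hi]
    exact hpq.1 i b hb
  have hps : ∀ i b, p i = some b → s i = some b := by
    intro i b hb
    have hi : i ∈ T := hPT (Option.isSome_iff_exists.mpr ⟨b, hb⟩)
    simp only [hsdef, restrictC, if_pos hi]
    exact hpq.1 i b hb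
  have hrq : ∀ i b, r i = some b → q i = some b := by
    intro i b hb
    simp only [hrdef, restrictC] at hb
    split at hb
    · exact hb
    · exact absurd hb (by simp)
  have hsq : ∀ i b, s i = some b → q i = some b := by
    intro i b hb
    simp only [hsdef, restrictC] at hb
    split at hb
    · exact hb
    · exact absurd hb (by simp)
  -- growth inclusions
  have growPr : ∀ κ', growClasses mu κ' (cdom p) (cdom r) ⊆
      growClasses mu κ' (cdom p) (cdom q) := fun κ' =>
    growClasses_sandwich mu κ' hPr hrQ
  have growPs : ∀ κ', growClasses mu κ' (cdom p) (cdom s) ⊆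
      growClasses mu κ' (cdom p) (cdom q) := fun κ' =>
    growClasses_sandwich mu κ' hPs hsQ
  have growRq : ∀ κ', growClasses mu κ' (cdom r) (cdom q) ⊆
      growClasses mu κ' (cdom p) (cdom q) := by
    intro κ'
    refine growClasses_key mu κ κ' hrQ ?_ ?_
    · intro ξ hξ hξr hξp
      exact hξr (hcr ▸ ⟨hξ, hPS hξp⟩)
    · intro η ξ hη hηp hξ hξr h
      have hηS : η ∈ S := (hcr ▸ hη : η ∈ cdom q ∩ S).2
      have hηe : Ecl κ η ∩ cdom p = ∅ := hηS.resolve_left hηp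
      have hξnS : ξ ∉ S := fun hh => hξr (hcr ▸ ⟨hξ, hh⟩)
      have hξne : Ecl κ ξ ∩ cdom p ≠ ∅ := fun hh => hξnS (Or.inr hh)
      exact (Set.nonempty_iff_ne_empty.mp (h.mpr
        (Set.nonempty_iff_ne_empty.mpr hξne))) hηe
  have growSq : ∀ κ', growClasses mu κ' (cdom s) (cdom q) ⊆
      growClasses mu κ' (cdom p) (cdom q) := by
    intro κ'
    refine growClasses_key mu κ κ' hsQ ?_ ?_
    · intro ξ hξ hξs hξp
      exact hξs (hcs ▸ ⟨hξ, hPT hξp⟩)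
    · intro η ξ hη hηp hξ hξs h
      have hηT : η ∈ T := (hcs ▸ hη : η ∈ cdom q ∩ T).2
      have hξnT : ξ ∉ T := fun hh => hξs (hcs ▸ ⟨hξ, hh⟩)
      have hξe : Ecl κ ξ ∩ cdom p = ∅ := not_not.mp hξnT
      exact (Set.nonempty_iff_ne_empty.mp (h.mp
        (Set.nonempty_iff_ne_empty.mpr hηT))) hξe
  -- inQ for r and s
  have hinr : inQ lam mu K r := by
    refine ⟨hrQ.trans hq.1, fun i hi κ' hκ' => lt_of_le_of_lt ?_ (hq.2 i hi κ' hκ')⟩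
    exact Cardinal.mk_le_mk_of_subset (Set.inter_subset_inter_right _ hrQ)
  have hins : inQ lam mu K s := by
    refine ⟨hsQ.trans hq.1, fun i hi κ' hκ' => lt_of_le_of_lt ?_ (hq.2 i hi κ' hκ')⟩
    exact Cardinal.mk_le_mk_of_subset (Set.inter_subset_inter_right _ hsQ)
  -- the order relations
  have hle_pr : condLe lam mu K p r :=
    ⟨hpr, fun κ' hκ' => lt_of_le_of_lt
      (Cardinal.mk_le_mk_of_subset (growPr κ')) (hpq.2 κ' hκ')⟩
  have hle_ps : condLe lam mu K p s :=
    ⟨hps, fun κ' hκ' => lt_of_le_of_lt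
      (Cardinal.mk_le_mk_of_subset (growPs κ')) (hpq.2 κ' hκ')⟩
  have hle_rq : condLe lam mu K r q :=
    ⟨hrq, fun κ' hκ' => lt_of_le_of_lt
      (Cardinal.mk_le_mk_of_subset (growRq κ')) (hpq.2 κ' hκ')⟩
  have hle_sq : condLe lam mu K s q :=
    ⟨hsq, fun κ' hκ' => lt_of_le_of_lt
      (Cardinal.mk_le_mk_of_subset (growSq κ')) (hpq.2 κ' hκ')⟩
  refine ⟨r, s, rfl, rfl, hinr, hins, ⟨hle_pr, ?_⟩, ⟨hle_rq, ?_⟩, ⟨hle_ps, ?_⟩,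
    ⟨hle_sq, ?_⟩, ?_⟩
  · -- p ≤pr_κ r : no E_κ-class represented in dom p grows from dom p to dom r
    rintro i ⟨⟨j, hjA, hjP⟩, hne⟩
    obtain ⟨ξ, hξ, hξp⟩ :=
      exists_of_ne_of_subset (Set.inter_subset_inter_right _ hPr) hne
    have hξnp : ξ ∉ cdom p := fun h => hξp ⟨hξ.1, h⟩
    have hξS : ξ ∈ S := (hcr ▸ hξ.2 : ξ ∈ cdom q ∩ S).2
    have hξe : Ecl κ ξ ∩ cdom p = ∅ := hξS.resolve_left hξnp
    have : j ∈ Ecl κ ξ ∩ cdom p := by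
      rw [Ecl_eq_of_mem hξ.1]; exact ⟨hjA, hjP⟩
    rw [hξe] at this
    exact this
  · -- r ≤apr_κ q
    intro i hi
    by_cases he : Ecl κ i ∩ cdom p = ∅
    · exact ⟨i, Ecl_self κ i, hcr ▸ ⟨hi, Or.inr he⟩⟩
    · obtain ⟨j, hj1, hj2⟩ := Set.nonempty_iff_ne_empty.mpr he
      exact ⟨j, hj1, hPr hj2⟩
  · -- p ≤apr_κ s
    intro i hi
    have hiT : i ∈ T := (hcs ▸ hi : i ∈ cdom q ∩ T).2
    exact Set.nonempty_iff_ne_empty.mpr hiT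
  · -- s ≤pr_κ q
    rintro i ⟨⟨η, hηA, hηs⟩, hne⟩
    obtain ⟨ξ, hξ, hξs⟩ :=
      exists_of_ne_of_subset (Set.inter_subset_inter_right _ hsQ) hne
    have hηT : η ∈ T := (hcs ▸ hηs : η ∈ cdom q ∩ T).2
    have hξnT : ξ ∉ T := fun hh => hξs ⟨hξ.1, hcs ▸ ⟨hξ.2, hh⟩⟩
    have hξe : Ecl κ ξ ∩ cdom p = ∅ := not_not.mp hξnT
    have : Ecl κ ξ = Ecl κ η := by
      rw [Ecl_eq_of_mem hξ.1, Ecl_eq_of_mem hηA]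
    rw [this] at hξe
    exact hηT hξe
  · -- q = r ∪ s
    funext ξ
    by_cases hS : ξ ∈ S
    · simp only [unionC, hrdef, restrictC, if_pos hS]
      cases hqξ : q ξ with
      | none =>
        by_cases hT : ξ ∈ T <;> simp [hsdef, restrictC, hT, hqξ]
      | some b => simp
    · have hT : ξ ∈ T := by
        simp only [hSdef, Set.mem_setOf_eq, not_or] at hS
        exact hS.2
      simp [unionC, hrdef, hsdef, restrictC, hS, hT]
end
end

section
/- If κ ∈ K, p ≤^*_κ q₁ and p ≤^*_κ q₂ where * ∈ {pr, apr}, and q₁, q₂ are compatible in Q (have a common upper bound), then q₁ ∪ q₂ ∈ Q and p ≤^*_κ q₁ ∪ q₂; moreover q₁ ≤ q₁ ∪ q₂ and q₂ ≤ q₁ ∪ q₂. -/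
open Cardinal Set

noncomputable section

attribute [local instance] Classical.propDecidable

lemma theta_regular (lam : Cardinal) (K : Set Cardinal) (κ : Cardinal) :
    (theta lam K κ).IsRegular := by
  have hne : {θ : Cardinal | θ.IsRegular ∧ sSup ((K ∩ Set.Iio κ) ∪ {lam}) ≤ θ}.Nonempty := by
    refine ⟨Order.succ (max (sSup ((K ∩ Set.Iio κ) ∪ {lam})) ℵ₀),
      Cardinal.isRegular_succ (le_max_right _ _), (le_max_left _ _).trans (Order.le_succ _)⟩
  exact (csInf_mem hne).1

lemma aleph0_le_lift_theta (lam : Cardinal.{0}) (K : Set Cardinal.{0}) (κ : Cardinal.{0}) :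
    ℵ₀ ≤ Cardinal.lift.{1} (theta lam K κ) := by
  exact Cardinal.aleph0_le_lift.mpr (theta_regular lam K κ).aleph0_le

lemma union_lt_theta {lam : Cardinal.{0}} {K : Set Cardinal.{0}} {κ : Cardinal.{0}}
    {α : Type 1} {A B : Set α} (hA : #A < Cardinal.lift.{1} (theta lam K κ))
    (hB : #B < Cardinal.lift.{1} (theta lam K κ)) :
    #(↥(A ∪ B)) < Cardinal.lift.{1} (theta lam K κ) :=
  (Cardinal.mk_union_le A B).trans_lt
    (Cardinal.add_lt_of_lt (aleph0_le_lift_theta lam K κ) hA hB)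

lemma cdom_mono {p q : Cond} (h : ∀ i b, p i = some b → q i = some b) :
    cdom p ⊆ cdom q := by
  intro i hi
  obtain ⟨b, hb⟩ := Option.isSome_iff_exists.mp hi
  exact Option.isSome_iff_exists.mpr ⟨b, h i b hb⟩

lemma unionC_left {p q : Cond} {i : Ordinal} {b : Bool} (h : p i = some b) :
    unionC p q i = some b := by simp [unionC, h]

/-- if `p ≤*_κ q₁, q₂` (`* ∈ {pr, apr}`) and `q₁, q₂` are compatible in
`Q`, then `q₁ ∪ q₂ ∈ Q`, `p ≤*_κ q₁ ∪ q₂`, and `q₁, q₂ ≤ q₁ ∪ q₂`. -/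
theorem stmt9 (lam mu : Cardinal) (K : Set Cardinal) (hctx : GroundCtx lam mu K)
    (κ : Cardinal) (hκ : κ ∈ K) (p q₁ q₂ : Cond)
    (hp : inQ lam mu K p) (hq₁ : inQ lam mu K q₁) (hq₂ : inQ lam mu K q₂)
    (hcompat : compatQ lam mu K q₁ q₂) :
    (condLePr lam mu K κ p q₁ → condLePr lam mu K κ p q₂ →
      inQ lam mu K (unionC q₁ q₂) ∧ condLePr lam mu K κ p (unionC q₁ q₂) ∧
        condLe lam mu K q₁ (unionC q₁ q₂) ∧ condLe lam mu K q₂ (unionC q₁ q₂)) ∧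
    (condLeApr lam mu K κ p q₁ → condLeApr lam mu K κ p q₂ →
      inQ lam mu K (unionC q₁ q₂) ∧ condLeApr lam mu K κ p (unionC q₁ q₂) ∧
        condLe lam mu K q₁ (unionC q₁ q₂) ∧ condLe lam mu K q₂ (unionC q₁ q₂)) := by
  obtain ⟨r, _hr, hq₁r, hq₂r⟩ := hcompat
  set u := unionC q₁ q₂ with hu
  have hdomu : cdom u = cdom q₁ ∪ cdom q₂ := cdom_unionC _ _
  -- values of the union go into r
  have hur : ∀ i b, u i = some b → r i = some b := by
    intro i b h
    cases h1 : q₁ i with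
    | none =>
      have : q₂ i = some b := by simpa [hu, unionC, h1] using h
      exact hq₂r.1 i b this
    | some b' =>
      have hb : b' = b := by simpa [hu, unionC, h1] using h
      exact hb ▸ hq₁r.1 i b' h1
  have hdur : cdom u ⊆ cdom r := cdom_mono hur
  -- values of q₂ go into the union
  have hq2u : ∀ i b, q₂ i = some b → u i = some b := by
    intro i b h
    cases h1 : q₁ i with
    | none => simp [hu, unionC, h1, h]
    | some b' =>
      have e1 := hq₁r.1 i b' h1
      have e2 := hq₂r.1 i b h
      rw [e1] at e2
      injection e2 with e
      exact e ▸ unionC_left h1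
  -- the union is in Q
  have hinQ : inQ lam mu K u := by
    constructor
    · rw [hdomu]; exact Set.union_subset hq₁.1 hq₂.1
    · intro i hi κ' hκ'
      rw [hdomu, Set.inter_union_distrib_left]
      exact union_lt_theta (hq₁.2 i hi κ' hκ') (hq₂.2 i hi κ' hκ')
  -- q₁ ≤ union
  have hle1 : condLe lam mu K q₁ u := by
    refine ⟨fun i b h => unionC_left h, fun κ' hκ' => ?_⟩
    refine lt_of_le_of_lt (Cardinal.mk_le_mk_of_subset ?_) (hq₁r.2 κ' hκ')
    rintro A ⟨hAi, hne, hneq⟩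
    refine ⟨hAi, hne, fun heq => hneq ?_⟩
    have h1 : A ∩ cdom q₁ ⊆ A ∩ cdom u :=
      Set.inter_subset_inter_right A (by rw [hdomu]; exact Set.subset_union_left)
    have h2 : A ∩ cdom u ⊆ A ∩ cdom q₁ := by
      rw [heq]; exact Set.inter_subset_inter_right A hdur
    exact subset_antisymm h1 h2
  -- q₂ ≤ union
  have hle2 : condLe lam mu K q₂ u := by
    refine ⟨hq2u, fun κ' hκ' => ?_⟩
    refine lt_of_le_of_lt (Cardinal.mk_le_mk_of_subset ?_) (hq₂r.2 κ' hκ')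
    rintro A ⟨hAi, hne, hneq⟩
    refine ⟨hAi, hne, fun heq => hneq ?_⟩
    have h1 : A ∩ cdom q₂ ⊆ A ∩ cdom u :=
      Set.inter_subset_inter_right A (by rw [hdomu]; exact Set.subset_union_right)
    have h2 : A ∩ cdom u ⊆ A ∩ cdom q₂ := by
      rw [heq]; exact Set.inter_subset_inter_right A hdur
    exact subset_antisymm h1 h2
  -- p ≤ union, given p ≤ q₁ and p ≤ q₂
  have key : condLe lam mu K p q₁ → condLe lam mu K p q₂ → condLe lam mu K p u := by
    intro h1 h2
    refine ⟨fun i b h => unionC_left (h1.1 i b h), fun κ' hκ' => ?_⟩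
    have hsub : growClasses mu κ' (cdom p) (cdom u) ⊆
        growClasses mu κ' (cdom p) (cdom q₁) ∪ growClasses mu κ' (cdom p) (cdom q₂) := by
      rintro A ⟨hAi, hne, hneq⟩
      by_cases hc1 : A ∩ cdom p = A ∩ cdom q₁
      · by_cases hc2 : A ∩ cdom p = A ∩ cdom q₂
        · exfalso
          exact hneq (by
            rw [hdomu, Set.inter_union_distrib_left, ← hc1, ← hc2, Set.union_self])
        · exact Or.inr ⟨hAi, hne, hc2⟩
      · exact Or.inl ⟨hAi, hne, hc1⟩
    exact lt_of_le_of_lt (Cardinal.mk_le_mk_of_subset hsub)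
      (union_lt_theta (h1.2 κ' hκ') (h2.2 κ' hκ'))
  constructor
  · -- pure case
    intro hpr1 hpr2
    refine ⟨hinQ, ⟨key hpr1.1 hpr2.1, ?_⟩, hle1, hle2⟩
    rintro i ⟨hne, hneq⟩
    have e1 : Ecl κ i ∩ cdom p = Ecl κ i ∩ cdom q₁ := by
      by_contra h; exact hpr1.2 i ⟨hne, h⟩
    have e2 : Ecl κ i ∩ cdom p = Ecl κ i ∩ cdom q₂ := by
      by_contra h; exact hpr2.2 i ⟨hne, h⟩
    exact hneq (by
      rw [hdomu, Set.inter_union_distrib_left, ← e1, ← e2, Set.union_self])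
  · -- apure case
    intro hapr1 hapr2
    refine ⟨hinQ, ⟨key hapr1.1 hapr2.1, ?_⟩, hle1, hle2⟩
    intro i hi
    rw [hdomu] at hi
    rcases hi with h | h
    · exact hapr1.2 i h
    · exact hapr2.2 i h
end
end
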